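/- arXiv:1902.04430 — 13 statements merged into one kernel-verified Lean document; each statement's English description precedes it below -/
import Mathlib

section
/- Let Δ : A → A be an ℝ-linear σ̃-derivation. Then for every i ∈ X and every l ∈ X with l ≠ i and l ≠ σ(i), the l-th component of Δ(e_i) is zero, i.e. Δ(e_i)(l) = 0. -/
/-- The indicator function of `{i}` in `Fin n → ℝ`. -/
def eFun {n : ℕ} (i : Fin n) : Fin n → ℝ := fun j => if j = i then 1 else 0

lemma isIdempotentElem_eFun {n : ℕ} (i : Fin n) : IsIdempotentElem (eFun i) := by
  funext j
  by_cases h : j = i <;> simp [eFun, h]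

lemma twistedDerivation_apply_eq_zero_of_isIdempotentElem {X R : Type*}
    [NonUnitalNonAssocSemiring R] (σ : Equiv.Perm X) (Δ : (X → R) → X → R) {e : X → R}
    (he : IsIdempotentElem e) (hΔ : Δ (e * e) = (e ∘ σ.symm) * Δ e + Δ e * e) {l : X}
    (hl : e l = 0) (hσl : e (σ.symm l) = 0) :
    Δ e l = 0 := by
  rw [he.eq] at hΔ
  simpa [hl, hσl] using congrFun hΔ l

theorem stmt0_general (n : ℕ) (σ : Equiv.Perm (Fin n))
    (Δ : (Fin n → ℝ) →ₗ[ℝ] (Fin n → ℝ))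
    (hΔ : ∀ f g : Fin n → ℝ, Δ (f * g) = (f ∘ ⇑σ.symm) * Δ g + Δ f * g)
    (i l : Fin n) (hli : l ≠ i) (hlσ : l ≠ σ i) :
    Δ (eFun i) l = 0 := by
  have hσli : σ.symm l ≠ i := fun h => hlσ (σ.symm_apply_eq.mp h)
  exact twistedDerivation_apply_eq_zero_of_isIdempotentElem σ Δ (isIdempotentElem_eFun i)
    (hΔ _ _) (if_neg hli) (if_neg hσli)

theorem stmt0 (n : ℕ) (hn : 1 ≤ n) (σ : Equiv.Perm (Fin n))
    (Δ : (Fin n → ℝ) →ₗ[ℝ] (Fin n → ℝ))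
    (hΔ : ∀ f g : Fin n → ℝ, Δ (f * g) = (f ∘ ⇑σ.symm) * Δ g + Δ f * g)
    (i l : Fin n) (hli : l ≠ i) (hlσ : l ≠ σ i) :
    Δ (eFun i) l = 0 :=
  stmt0_general n σ Δ hΔ i l hli hlσ
end

section
/- Let Δ : A → A be an ℝ-linear map such that for every i ∈ X: (1) Δ(e_i)(l) = 0 for all l ∈ X with l ≠ i and l ≠ σ(i), and (2) Δ(e_i)(σ(i)) = −Δ(e_{σ(i)})(σ(i)). Then Δ is a σ̃-derivation. -/
lemma eFun_mul {n : ℕ} (i j : Fin n) :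
    eFun i * eFun j = if i = j then eFun i else 0 := by
  funext k
  by_cases h : i = j
  · subst h; by_cases hk : k = i <;> simp [eFun, hk]
  · simp only [if_neg h, Pi.mul_apply, Pi.zero_apply, eFun]
    by_cases hk : k = i <;> by_cases hk' : k = j <;>
      simp [hk, hk', h, Ne.symm h]

lemma key {n : ℕ} (σ : Equiv.Perm (Fin n))
    (Δ : (Fin n → ℝ) →ₗ[ℝ] (Fin n → ℝ))
    (h1 : ∀ i l : Fin n, l ≠ i → l ≠ σ i → Δ (eFun i) l = 0)
    (h2 : ∀ i : Fin n, Δ (eFun i) (σ i) = - Δ (eFun (σ i)) (σ i))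
    (i j : Fin n) :
    Δ (eFun i * eFun j) = (eFun i ∘ ⇑σ.symm) * Δ (eFun j) + Δ (eFun i) * eFun j := by
  funext l
  rw [eFun_mul]
  simp only [Pi.add_apply, Pi.mul_apply, Function.comp_apply, eFun]
  have hsig : (σ.symm l = i) ↔ (l = σ i) := by
    constructor
    · intro h; rw [← h]; simp
    · intro h; rw [h]; simp
  by_cases hij : i = j
  · subst hij
    rw [if_pos rfl]
    by_cases hl2 : l = σ i
    · by_cases hl1 : l = i
      · have hfix : σ i = i := by rw [← hl2, hl1]
        have h0 : Δ (eFun i) l = 0 := by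
          have := h2 i
          rw [hfix] at this
          rw [hl1]; linarith
        simp [h0]
      · rw [if_pos (hsig.mpr hl2), if_neg hl1]; ring
    · have hs : σ.symm l ≠ i := fun h => hl2 (hsig.mp h)
      by_cases hl1 : l = i
      · rw [if_neg hs, if_pos hl1]; ring
      · rw [if_neg hs, if_neg hl1, h1 i l hl1 hl2]; ring
  · rw [if_neg hij, map_zero]
    by_cases hl2 : l = σ i
    · by_cases hlj : l = j
      · have hji : j = σ i := hlj ▸ hl2
        rw [if_pos (hsig.mpr hl2), if_pos hlj]
        have := h2 i
        rw [← hji] at this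
        rw [hlj]
        simp only [Pi.zero_apply]
        linarith
      · have hlsj : l ≠ σ j := by
          rw [hl2]; exact fun h => hij (σ.injective h)
        rw [if_pos (hsig.mpr hl2), if_neg hlj, h1 j l hlj hlsj]
        simp
    · have hs : σ.symm l ≠ i := fun h => hl2 (hsig.mp h)
      by_cases hlj : l = j
      · have hli : l ≠ i := fun h => hij (h.symm.trans hlj)
        rw [if_neg hs, if_pos hlj, h1 i l hli hl2]
        simp
      · rw [if_neg hs, if_neg hlj]
        simp

theorem stmt3 (n : ℕ) (hn : 1 ≤ n) (σ : Equiv.Perm (Fin n))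
    (Δ : (Fin n → ℝ) →ₗ[ℝ] (Fin n → ℝ))
    (h1 : ∀ i l : Fin n, l ≠ i → l ≠ σ i → Δ (eFun i) l = 0)
    (h2 : ∀ i : Fin n, Δ (eFun i) (σ i) = - Δ (eFun (σ i)) (σ i)) :
    ∀ f g : Fin n → ℝ, Δ (f * g) = (f ∘ ⇑σ.symm) * Δ g + Δ f * g := by
  intro f g
  have hdecomp : ∀ h : Fin n → ℝ, h = ∑ i, h i • eFun i := by
    intro h
    funext l
    simp [eFun, Finset.sum_apply]
  have hmul : f * g = ∑ i, ∑ j, (f i * g j) • (eFun i * eFun j) := by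
    funext l
    simp only [Finset.sum_apply, Pi.smul_apply, Pi.mul_apply, eFun, smul_eq_mul,
      mul_ite, mul_one, mul_zero, ite_mul, zero_mul]
    simp [Finset.sum_ite_eq']
  have hDg : Δ g = ∑ j, g j • Δ (eFun j) := by
    conv_lhs => rw [hdecomp g]
    rw [map_sum]; simp [map_smul]
  have hDf : Δ f = ∑ i, f i • Δ (eFun i) := by
    conv_lhs => rw [hdecomp f]
    rw [map_sum]; simp [map_smul]
  rw [hmul, map_sum]
  simp only [map_sum, map_smul]
  rw [Finset.sum_congr rfl (fun i _ => Finset.sum_congr rfl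
    (fun j _ => by rw [key σ Δ h1 h2 i j]))]
  funext l
  rw [hDg, hDf]
  simp only [Finset.sum_apply, Pi.smul_apply, Pi.add_apply, Pi.mul_apply,
    Function.comp_apply, smul_eq_mul, eFun, mul_ite, mul_one, mul_zero, ite_mul,
    zero_mul, mul_add, Finset.sum_add_distrib]
  congr 1
  · rw [Finset.sum_comm, Finset.mul_sum]
    refine Finset.sum_congr rfl (fun j _ => ?_)
    rw [Finset.sum_ite_eq]
    simp; ring
  · have hcol : ∀ i : Fin n,
        (∑ x1, if l = x1 then f i * g x1 * Δ (eFun i) l else 0)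
          = f i * g l * Δ (eFun i) l := by
      intro i; rw [Finset.sum_ite_eq]; simp
    rw [Finset.sum_congr rfl (fun i _ => hcol i), Finset.sum_mul]
    exact Finset.sum_congr rfl (fun i _ => by ring)
end

section
/- Let F : ℕ → A be finitely supported (F(k) = 0 for all but finitely many k), representing the element Σ_k F(k)·x^k of the skew polynomial ring A[x; σ̃, 0], in which x·g = σ̃(g)·x for g ∈ A. Then F(k)·σ̃^k(g) = g·F(k) for all g ∈ A and all k ∈ ℕ (i.e. Σ_k F(k)·x^k commutes with every element of A) if and only if for every k ∈ ℕ, F(k) vanishes on Sep^k(X), i.e. F(k)(x) = 0 for every x ∈ X with σ^k(x) ≠ x. -/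
theorem stmt5 (n : ℕ) (hn : 1 ≤ n) (σ : Equiv.Perm (Fin n))
    (F : ℕ → Fin n → ℝ) (hF : (Function.support F).Finite) :
    (∀ (g : Fin n → ℝ) (k : ℕ), F k * (g ∘ ⇑(σ ^ k).symm) = g * F k) ↔
      (∀ (k : ℕ) (x : Fin n), (σ ^ k) x ≠ x → F k x = 0) := by
  constructor
  · intro h k x hx
    have h1 := congrFun (h (fun y => if y = x then (1:ℝ) else 0) k) x
    simp only [Pi.mul_apply, Function.comp_apply] at h1
    have hne : (σ ^ k).symm x ≠ x := by
      intro he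
      apply hx
      conv_lhs => rw [← he]
      simp
    rw [if_neg hne] at h1
    simpa using h1.symm
  · intro h g k
    funext x
    simp only [Pi.mul_apply, Function.comp_apply]
    by_cases hx : (σ ^ k) x = x
    · have : (σ ^ k).symm x = x := by
        conv_lhs => rw [← hx]
        simp
      rw [this, mul_comm]
    · rw [h k x hx, zero_mul, mul_zero]
end

section
/- Let Δ : A → A be a σ̃-derivation, let m ∈ ℕ, and let f_0, …, f_m ∈ A be such that for every g ∈ A and every k ∈ {0, 1, …, m} one has g·f_k = Σ_{j=k}^{m} f_j·π_k^j(g) (the condition that Σ_{k=0}^m f_k x^k lies in the centralizer of A in the Ore extension A[x; σ̃, Δ]). Then f_m vanishes on Sep^m(X), i.e. f_m(x) = 0 for every x ∈ X with σ^m(x) ≠ x. -/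
/-! Since `π_m^m = σ̃^m`, the coefficient `k = m` of the centralizer condition reads
`g · f_m = f_m · (g ∘ σ⁻ᵐ)`. Testing it on the indicator `g` of a point `x` with `σᵐ x ≠ x`
and evaluating at `x` gives `f_m x = f_m x · g (σ⁻ᵐ x) = 0`. -/

/-- The maps `π_k^j` of Richter et al.: `piMap s d j k = π_k^j`, defined by
`π_0^0 = id`, `π_k^j = 0` for `k > j`, and `π_k^j = s ∘ π_{k-1}^{j-1} + d ∘ π_k^{j-1}`
(where `π_{k-1}^{j-1}` is interpreted as `0` when `k = 0`). -/
def piMap {A : Type*} [Zero A] [Add A] (s d : A → A) : ℕ → ℕ → A → A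
  | 0, 0 => id
  | 0, _ + 1 => fun _ => 0
  | j + 1, 0 => fun g => d (piMap s d j 0 g)
  | j + 1, k + 1 => fun g => s (piMap s d j k g) + d (piMap s d j (k + 1) g)

section piMap

variable {A : Type*} [AddZeroClass A] {s d : A → A}

theorem piMap_eq_zero_of_lt (hs : s 0 = 0) (hd : d 0 = 0) {j k : ℕ} (hjk : j < k) :
    piMap s d j k = 0 := by
  induction j generalizing k with
  | zero =>
    obtain ⟨k, rfl⟩ := Nat.exists_eq_add_of_lt hjk
    rfl
  | succ j ih =>
    obtain ⟨k, rfl⟩ : ∃ k', k = k' + 1 := ⟨k - 1, by omega⟩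
    funext g
    simp only [piMap, ih (k := k) (by omega), ih (k := k + 1) (by omega), Pi.zero_apply, hs, hd,
      add_zero]

theorem piMap_self (hs : s 0 = 0) (hd : d 0 = 0) (j : ℕ) : piMap s d j j = s^[j] := by
  induction j with
  | zero => rfl
  | succ j ih =>
    funext g
    simp only [piMap, ih, piMap_eq_zero_of_lt hs hd (Nat.lt_succ_self j), Pi.zero_apply, hd,
      add_zero, Function.iterate_succ_apply']

end piMap

theorem iterate_comp_perm_symm {α β : Type*} (σ : Equiv.Perm α) (m : ℕ) (g : α → β) :
    (fun h : α → β => h ∘ ⇑σ.symm)^[m] g = g ∘ ⇑(σ ^ m).symm := by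
  induction m generalizing g with
  | zero => rfl
  | succ m ih => rw [Function.iterate_succ_apply, ih, pow_succ]; rfl

theorem stmt6_general (n : ℕ) (σ : Equiv.Perm (Fin n))
    (Δ : (Fin n → ℝ) →ₗ[ℝ] (Fin n → ℝ))
    (m : ℕ) (f : ℕ → Fin n → ℝ)
    (hc : ∀ g : Fin n → ℝ, ∀ k ≤ m,
      g * f k = ∑ j ∈ Finset.Icc k m, f j * piMap (fun h => h ∘ ⇑σ.symm) (⇑Δ) j k g) :
    ∀ x : Fin n, (σ ^ m) x ≠ x → f m x = 0 := by
  intro x hx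
  have hleading := hc (Pi.single x 1) m le_rfl
  rw [Finset.Icc_self, Finset.sum_singleton, piMap_self (funext fun _ => rfl) (map_zero Δ),
    iterate_comp_perm_symm] at hleading
  have hσx : (σ ^ m).symm x ≠ x := fun h => hx (by rw [← h, Equiv.apply_symm_apply, h])
  simpa [hσx] using congrFun hleading x

theorem stmt6 (n : ℕ) (hn : 1 ≤ n) (σ : Equiv.Perm (Fin n))
    (Δ : (Fin n → ℝ) →ₗ[ℝ] (Fin n → ℝ))
    (hΔ : ∀ f g : Fin n → ℝ, Δ (f * g) = (f ∘ ⇑σ.symm) * Δ g + Δ f * g)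
    (m : ℕ) (f : ℕ → Fin n → ℝ)
    (hc : ∀ g : Fin n → ℝ, ∀ k ≤ m,
      g * f k = ∑ j ∈ Finset.Icc k m, f j * piMap (fun h => h ∘ ⇑σ.symm) (⇑Δ) j k g) :
    ∀ x : Fin n, (σ ^ m) x ≠ x → f m x = 0 :=
  stmt6_general n σ Δ m f hc
end

section
/- Let F : ℕ → A be finitely supported (F(k) = 0 for all but finitely many k), representing the element Σ_k F(k)·x^k of the skew polynomial ring A[x; σ̃, 0]. Then for every finitely supported G : ℕ → A and every m ∈ ℕ one has Σ_{k=0}^{m} F(k)·σ̃^k(G(m−k)) = Σ_{k=0}^{m} G(k)·σ̃^k(F(m−k)) (i.e. Σ_k F(k)·x^k lies in the center of A[x; σ̃, 0]) if and only if for every k ∈ ℕ, F(k) vanishes on Sep^k(X) and σ̃(F(k)) = F(k). -/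
/-!
Testing centrality against monomials reads off the two conditions. Against `δₓ` in degree `0`,
the `k`-th coefficients give `F(k) · (δₓ ∘ σ⁻ᵏ) = δₓ · F(k)`, which at `x` forces `F(k)(x) = 0`
when `σᵏ x ≠ x`; against `x` itself (the constant `1` in degree `1`), the `(k+1)`-st coefficients
give `F(k) = σ̃(F(k))`. Conversely, under these conditions `F(k) · σ̃ᵏ(g) = F(k) · g` and
`σ̃ʲ(F(k)) = F(k)`, so both products reduce to the ordinary convolution `∑ F(k) G(m - k)`,
which is symmetric because `A` is commutative.
-/

open Finset

namespace SkewPolynomial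

variable {X R : Type*} [CommSemiring R] (σ : Equiv.Perm X)

def skewMulCoeff (F G : ℕ → X → R) (m : ℕ) : X → R :=
  ∑ k ∈ range (m + 1), F k * (G (m - k) ∘ ⇑(σ ^ k).symm)

def IsSkewCentral (F : ℕ → X → R) : Prop :=
  ∀ G : ℕ → X → R, (Function.support G).Finite → ∀ m, skewMulCoeff σ F G m = skewMulCoeff σ G F m

theorem skewMulCoeff_single_right (F : ℕ → X → R) (k l : ℕ) (g : X → R) :
    skewMulCoeff σ F (Pi.single l g) (k + l) = F k * (g ∘ ⇑(σ ^ k).symm) := by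
  rw [skewMulCoeff, sum_eq_single k]
  · simp
  · intro j hj hjk
    rw [Pi.single_eq_of_ne (by grind)]
    simp
  · simp

theorem skewMulCoeff_single_left (F : ℕ → X → R) (k l : ℕ) (g : X → R) :
    skewMulCoeff σ (Pi.single l g) F (k + l) = g * (F k ∘ ⇑(σ ^ l).symm) := by
  rw [skewMulCoeff, sum_eq_single l]
  · simp
  · intro j _ hjl
    simp [Pi.single_eq_of_ne hjl]
  · simp

theorem finite_support_single {ι M : Type*} [DecidableEq ι] [Zero M] (i : ι) (a : M) :
    (Function.support (Pi.single i a)).Finite :=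
  (Set.finite_singleton i).subset Pi.support_single_subset

theorem apply_eq_zero_of_isSkewCentral [DecidableEq X] {F : ℕ → X → R}
    (hF : IsSkewCentral σ F) {k : ℕ} {x : X} (hx : (σ ^ k) x ≠ x) : F k x = 0 := by
  have hδ := congrFun (hF _ (finite_support_single 0 (Pi.single x 1)) (k + 0)) x
  rw [skewMulCoeff_single_right, skewMulCoeff_single_left] at hδ
  have hxσ : (σ ^ k).symm x ≠ x := fun h => hx (by rw [← h, Equiv.apply_symm_apply, h])
  simpa [Pi.single_apply, hxσ, eq_comm, pull_end] using hδ

theorem comp_symm_of_isSkewCentral {F : ℕ → X → R} (hF : IsSkewCentral σ F) (k : ℕ) :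
    F k ∘ ⇑σ.symm = F k := by
  have hx := hF _ (finite_support_single 1 1) (k + 1)
  rw [skewMulCoeff_single_right, skewMulCoeff_single_left] at hx
  simpa using hx.symm

theorem comp_pow_symm_of_comp_symm {α : Type*} {f : X → α} (hf : f ∘ ⇑σ.symm = f) (k : ℕ) :
    f ∘ ⇑(σ ^ k).symm = f := by
  induction k with
  | zero => rfl
  | succ k ih =>
    calc f ∘ ⇑(σ ^ (k + 1)).symm = f ∘ ⇑(σ ^ k).symm ∘ ⇑σ.symm := by rw [pow_succ']; rfl
      _ = f := by rw [← Function.comp_assoc, ih, hf]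

theorem mul_comp_pow_symm_of_eq_zero {f : X → R} {k : ℕ} (hf : ∀ x, (σ ^ k) x ≠ x → f x = 0)
    (g : X → R) : f * (g ∘ ⇑(σ ^ k).symm) = f * g := by
  funext x
  by_cases hx : (σ ^ k) x = x
  · simp [(σ ^ k).symm_apply_eq.mpr hx.symm]
  · simp [hf x hx]

theorem skewMulCoeff_comm_of_forall {F : ℕ → X → R}
    (hF : ∀ k, (∀ x, (σ ^ k) x ≠ x → F k x = 0) ∧ F k ∘ ⇑σ.symm = F k) (G : ℕ → X → R)
    (m : ℕ) : skewMulCoeff σ F G m = skewMulCoeff σ G F m :=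
  calc skewMulCoeff σ F G m = ∑ k ∈ range (m + 1), F k * G (m - k) :=
        sum_congr rfl fun k _ => mul_comp_pow_symm_of_eq_zero σ (hF k).1 _
    _ = ∑ k ∈ range (m + 1), G k * F (m - k) := by
        rw [← sum_range_reflect]
        refine sum_congr rfl fun k hk => ?_
        rw [mul_comm, show m - (m + 1 - 1 - k) = k by grind, show m + 1 - 1 - k = m - k by omega]
    _ = skewMulCoeff σ G F m :=
        sum_congr rfl fun k _ => by rw [comp_pow_symm_of_comp_symm σ (hF _).2]

theorem isSkewCentral_iff [DecidableEq X] (F : ℕ → X → R) :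
    IsSkewCentral σ F ↔ ∀ k, (∀ x, (σ ^ k) x ≠ x → F k x = 0) ∧ F k ∘ ⇑σ.symm = F k :=
  ⟨fun hF k =>
      ⟨fun _ hx => apply_eq_zero_of_isSkewCentral σ hF hx, comp_symm_of_isSkewCentral σ hF k⟩,
    fun hF G _ m => skewMulCoeff_comm_of_forall σ hF G m⟩

end SkewPolynomial

theorem stmt7_general (n : ℕ) (σ : Equiv.Perm (Fin n))
    (F : ℕ → Fin n → ℝ) :
    (∀ G : ℕ → Fin n → ℝ, (Function.support G).Finite → ∀ m : ℕ,
        ∑ k ∈ Finset.range (m + 1), F k * (G (m - k) ∘ ⇑(σ ^ k).symm) =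
          ∑ k ∈ Finset.range (m + 1), G k * (F (m - k) ∘ ⇑(σ ^ k).symm)) ↔
      (∀ k : ℕ, (∀ x : Fin n, (σ ^ k) x ≠ x → F k x = 0) ∧ F k ∘ ⇑σ.symm = F k) :=
  SkewPolynomial.isSkewCentral_iff σ F

theorem stmt7 (n : ℕ) (hn : 1 ≤ n) (σ : Equiv.Perm (Fin n))
    (F : ℕ → Fin n → ℝ) (hF : (Function.support F).Finite) :
    (∀ G : ℕ → Fin n → ℝ, (Function.support G).Finite → ∀ m : ℕ,
        ∑ k ∈ Finset.range (m + 1), F k * (G (m - k) ∘ ⇑(σ ^ k).symm) =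
          ∑ k ∈ Finset.range (m + 1), G k * (F (m - k) ∘ ⇑(σ ^ k).symm)) ↔
      (∀ k : ℕ, (∀ x : Fin n, (σ ^ k) x ≠ x → F k x = 0) ∧ F k ∘ ⇑σ.symm = F k) :=
  stmt7_general n σ F
end

section
/- Let Δ : A → A be an ℝ-linear σ̃-derivation. Then for every i ∈ J: (1) Δ(e_i)(k) = 0 for all k ∈ J with k ≠ i and k ≠ σ(i), and (2) Δ(e_i)(σ(i)) = −Δ(e_{σ(i)})(σ(i)). -/
theorem stmt8 (J : Type*) [Countable J] (σ : J ≃ J)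
    (Δ : (J →₀ ℝ) →ₗ[ℝ] (J →₀ ℝ))
    (hΔ : ∀ f g : J →₀ ℝ, Δ (f * g) = Finsupp.equivMapDomain σ f * Δ g + Δ f * g)
    (i : J) :
    (∀ k : J, k ≠ i → k ≠ σ i → Δ (Finsupp.single i 1) k = 0) ∧
      Δ (Finsupp.single i 1) (σ i) = - Δ (Finsupp.single (σ i) 1) (σ i) := by
  classical
  have h1 : (Finsupp.single i 1 : J →₀ ℝ) * Finsupp.single i 1 = Finsupp.single i 1 := by
    ext k
    simp only [Finsupp.mul_apply, Finsupp.single_apply]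
    split <;> simp
  have key : Δ (Finsupp.single i 1) =
      Finsupp.single (σ i) 1 * Δ (Finsupp.single i 1)
        + Δ (Finsupp.single i 1) * Finsupp.single i 1 := by
    have := hΔ (Finsupp.single i 1) (Finsupp.single i 1)
    rw [h1] at this
    simpa [Finsupp.equivMapDomain_single] using this
  constructor
  · intro k hk1 hk2
    have hh := congrArg (fun f => f k) key
    simpa [Finsupp.mul_apply, Finsupp.single_apply, Ne.symm hk1, Ne.symm hk2] using hh
  · by_cases h : σ i = i
    · have hh := congrArg (fun f => f (σ i)) key
      simp only [Finsupp.add_apply, Finsupp.mul_apply, Finsupp.single_apply, h,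
        if_pos rfl, one_mul, mul_one] at hh
      rw [h]
      norm_num at hh
      linarith
    · have h0 : (Finsupp.single i 1 : J →₀ ℝ) * Finsupp.single (σ i) 1 = 0 := by
        ext k
        simp only [Finsupp.mul_apply, Finsupp.single_apply, Finsupp.coe_zero, Pi.zero_apply]
        split_ifs with ha hb <;> simp_all
      have h2 := hΔ (Finsupp.single i 1) (Finsupp.single (σ i) 1)
      rw [h0, map_zero] at h2
      have hh := congrArg (fun f => f (σ i)) h2.symm
      simp only [Finsupp.add_apply, Finsupp.mul_apply, Finsupp.single_apply,
        Finsupp.equivMapDomain_single, if_pos rfl, one_mul, mul_one,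
        Finsupp.coe_zero, Pi.zero_apply] at hh
      norm_num at hh
      linarith
end

section
/- Let Δ : A → A be an ℝ-linear map such that for every i ∈ J: (1) Δ(e_i) = −Δ(e_{σ(i)}), and (2) Δ(e_i)(k) = 0 for all k ∈ J with k ≠ i and k ≠ σ(i). Then Δ is a σ̃-derivation. -/
/-!
Both sides of the twisted Leibniz rule are bilinear in `(f, g)`, so it suffices to check it on
pairs of basis vectors `e_i, e_j`. For `i ≠ j` the right-hand side can only be nonzero at
`σ i = j`, where its two terms cancel by (1). For `i = j` it reads
`Δ e_i = Δ e_i (σ i) • e_{σ i} + Δ e_i i • e_i`, which is (2) when `σ i ≠ i`; at a fixed point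
of `σ`, (1) says `Δ e_i = -Δ e_i`, so both sides vanish.
-/

namespace Finsupp

section Pointwise

variable {R J : Type*}

instance [Semiring R] : IsScalarTower R (J →₀ R) (J →₀ R) :=
  ⟨fun r f g ↦ by ext; simp [mul_assoc]⟩

instance [CommSemiring R] : SMulCommClass R (J →₀ R) (J →₀ R) :=
  ⟨fun r f g ↦ by ext; simp [mul_left_comm]⟩

theorem single_mul_eq_single [MulZeroClass R] (a : J) (b : R) (f : J →₀ R) :
    single a b * f = single a (b * f a) := by
  ext k
  by_cases h : a = k <;> simp [h]

theorem twisted_leibniz_of_single [CommSemiring R] (τ Δ : (J →₀ R) →ₗ[R] (J →₀ R))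
    (h : ∀ i j, Δ (single i 1 * single j 1) =
      τ (single i 1) * Δ (single j 1) + Δ (single i 1) * single j 1)
    (f g : J →₀ R) : Δ (f * g) = τ f * Δ g + Δ f * g := by
  have key : (LinearMap.mul R (J →₀ R)).compr₂ Δ =
      (LinearMap.mul R (J →₀ R)).compl₁₂ τ Δ + LinearMap.mul R (J →₀ R) ∘ₗ Δ :=
    lhom_ext' fun i ↦ LinearMap.ext_ring <| lhom_ext' fun j ↦ LinearMap.ext_ring (h i j)
  exact LinearMap.congr_fun₂ key f g

end Pointwise

section TwistedDerivation

variable {R J : Type*} [CommRing R] {σ : J ≃ J} {Δ : (J →₀ R) →ₗ[R] (J →₀ R)}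

theorem map_single_one_eq_zero_of_fixed [NoZeroDivisors R] [CharZero R]
    (h1 : ∀ i, Δ (single i 1) = -Δ (single (σ i) 1)) {i : J} (hi : σ i = i) :
    Δ (single i 1) = 0 := by
  ext k
  have hk := DFunLike.congr_fun (h1 i) k
  rw [hi, neg_apply] at hk
  exact CharZero.eq_neg_self_iff.mp hk

theorem map_single_one_eq_of_not_fixed
    (h2 : ∀ i k, k ≠ i → k ≠ σ i → Δ (single i 1) k = 0) {i : J} (hi : σ i ≠ i) :
    Δ (single i 1) = single (σ i) (Δ (single i 1) (σ i)) + single i (Δ (single i 1) i) := by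
  ext k
  by_cases hki : k = i
  · subst hki
    simp [hi]
  by_cases hkσ : k = σ i
  · subst hkσ
    simp [hi]
  simp [h2 i k hki hkσ, Ne.symm hki, Ne.symm hkσ]

theorem map_single_one_eq [NoZeroDivisors R] [CharZero R]
    (h1 : ∀ i, Δ (single i 1) = -Δ (single (σ i) 1))
    (h2 : ∀ i k, k ≠ i → k ≠ σ i → Δ (single i 1) k = 0) (i : J) :
    Δ (single i 1) = single (σ i) (Δ (single i 1) (σ i)) + single i (Δ (single i 1) i) := by
  by_cases hi : σ i = i
  · simp [map_single_one_eq_zero_of_fixed h1 hi]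
  · exact map_single_one_eq_of_not_fixed h2 hi

theorem single_add_single_eq_zero_of_ne
    (h1 : ∀ i, Δ (single i 1) = -Δ (single (σ i) 1))
    (h2 : ∀ i k, k ≠ i → k ≠ σ i → Δ (single i 1) k = 0) {i j : J} (hij : i ≠ j) :
    single (σ i) (Δ (single j 1) (σ i)) + single j (Δ (single i 1) j) = 0 := by
  by_cases hj : j = σ i
  · subst hj
    rw [← single_add, h1 i, neg_apply, add_neg_cancel, single_zero]
  · rw [h2 j (σ i) (Ne.symm hj) (σ.injective.ne hij), h2 i j (Ne.symm hij) hj, single_zero,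
      single_zero, add_zero]

theorem map_single_one_mul_single_one [NoZeroDivisors R] [CharZero R]
    (h1 : ∀ i, Δ (single i 1) = -Δ (single (σ i) 1))
    (h2 : ∀ i k, k ≠ i → k ≠ σ i → Δ (single i 1) k = 0) (i j : J) :
    Δ (single i 1 * single j 1) =
      equivMapDomain σ (single i 1) * Δ (single j 1) + Δ (single i 1) * single j 1 := by
  rw [equivMapDomain_single, mul_comm (Δ _)]
  simp only [single_mul_eq_single, one_mul]
  obtain rfl | hij := eq_or_ne i j
  · rw [single_eq_same]
    exact map_single_one_eq h1 h2 i
  · rw [single_eq_of_ne hij, single_zero, map_zero]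
    exact (single_add_single_eq_zero_of_ne h1 h2 hij).symm

end TwistedDerivation

end Finsupp

theorem stmt9_general (J : Type*) (σ : J ≃ J)
    (Δ : (J →₀ ℝ) →ₗ[ℝ] (J →₀ ℝ))
    (h1 : ∀ i : J, Δ (Finsupp.single i 1) = - Δ (Finsupp.single (σ i) 1))
    (h2 : ∀ i k : J, k ≠ i → k ≠ σ i → Δ (Finsupp.single i 1) k = 0) :
    ∀ f g : J →₀ ℝ, Δ (f * g) = Finsupp.equivMapDomain σ f * Δ g + Δ f * g := by
  intro f g
  have hτ (x : J →₀ ℝ) :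
      (Finsupp.domLCongr σ : (J →₀ ℝ) ≃ₗ[ℝ] _) x = Finsupp.equivMapDomain σ x := rfl
  simpa only [LinearEquiv.coe_coe, hτ] using
    Finsupp.twisted_leibniz_of_single (Finsupp.domLCongr σ).toLinearMap Δ
      (by simpa only [LinearEquiv.coe_coe, hτ] using
        Finsupp.map_single_one_mul_single_one h1 h2) f g

theorem stmt9 (J : Type*) [Countable J] (σ : J ≃ J)
    (Δ : (J →₀ ℝ) →ₗ[ℝ] (J →₀ ℝ))
    (h1 : ∀ i : J, Δ (Finsupp.single i 1) = - Δ (Finsupp.single (σ i) 1))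
    (h2 : ∀ i k : J, k ≠ i → k ≠ σ i → Δ (Finsupp.single i 1) k = 0) :
    ∀ f g : J →₀ ℝ, Δ (f * g) = Finsupp.equivMapDomain σ f * Δ g + Δ f * g :=
  stmt9_general J σ Δ h1 h2
end

section
/- Let F : ℕ → A be finitely supported (F(k) = 0 for all but finitely many k), representing the element Σ_k F(k)·x^k of the non-unital skew polynomial ring A[x; σ̃, 0], in which multiplication is determined by (f·x^k)·g = f·σ̃^k(g)·x^k. Then F(k)·σ̃^k(g) = g·F(k) for all g ∈ A and all k ∈ ℕ (i.e. Σ_k F(k)·x^k commutes with every element of A) if and only if for every k ∈ ℕ, F(k) vanishes on Sep^k(J), i.e. F(k)(x) = 0 for every x ∈ J with σ^k(x) ≠ x. -/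
namespace Finsupp

variable {α R : Type*} [CommMonoidWithZero R]

theorem mul_equivMapDomain_apply (τ : Equiv.Perm α) (f g : α →₀ R) (x : α) :
    (f * equivMapDomain τ g) x = f x * g (τ.symm x) := by
  rw [mul_apply, equivMapDomain_apply]

theorem mul_equivMapDomain_eq_mul_comm_iff (τ : Equiv.Perm α) (f : α →₀ R) :
    (∀ g : α →₀ R, f * equivMapDomain τ g = g * f) ↔ ∀ x, τ x ≠ x → f x = 0 := by
  constructor
  · intro hcomm x hx
    have hmoved : τ.symm x ≠ x := fun h => hx (τ.symm_apply_eq.mp h).symm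
    -- at a point moved by `τ`, testing against `single x 1` kills the left side
    have hx_val := DFunLike.congr_fun (hcomm (single x 1)) x
    rwa [mul_equivMapDomain_apply, mul_apply, single_eq_of_ne' hmoved.symm, single_eq_same,
      mul_zero, one_mul, eq_comm] at hx_val
  · intro hvanish g
    ext x
    rw [mul_equivMapDomain_apply, mul_apply]
    by_cases hx : τ x = x
    · rw [τ.symm_apply_eq.mpr hx.symm, mul_comm]
    · rw [hvanish x hx, zero_mul, mul_zero]

end Finsupp

theorem stmt11_general (J : Type*) (σ : J ≃ J)
    (F : ℕ → J →₀ ℝ) :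
    (∀ (g : J →₀ ℝ) (k : ℕ), F k * Finsupp.equivMapDomain (σ ^ k) g = g * F k) ↔
      (∀ (k : ℕ) (x : J), (σ ^ k) x ≠ x → F k x = 0) := by
  rw [forall_comm]
  exact forall_congr' fun k => Finsupp.mul_equivMapDomain_eq_mul_comm_iff (σ ^ k) (F k)

theorem stmt11 (J : Type*) [Countable J] (σ : J ≃ J)
    (F : ℕ → J →₀ ℝ) (hF : (Function.support F).Finite) :
    (∀ (g : J →₀ ℝ) (k : ℕ), F k * Finsupp.equivMapDomain (σ ^ k) g = g * F k) ↔
      (∀ (k : ℕ) (x : J), (σ ^ k) x ≠ x → F k x = 0) :=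
  stmt11_general J σ F
end

section
/- Let Δ : A → A be a σ̃-derivation, let m ∈ ℕ, and let f_0, …, f_m ∈ A be such that for every g ∈ A and every k ∈ {0, 1, …, m} one has g·f_k = Σ_{j=k}^{m} f_j·π_k^j(g) (the condition that Σ_{k=0}^m f_k x^k lies in the centralizer of A in the non-unital Ore extension A[x; σ̃, Δ]). Then f_m vanishes on Sep^m(J), i.e. f_m(x) = 0 for every x ∈ J with σ^m(x) ≠ x. -/
lemma piMap_gt {A : Type*} [AddZeroClass A] (s d : A → A) (hs : s 0 = 0) (hd : d 0 = 0) :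
    ∀ j k, j < k → ∀ g, piMap s d j k g = 0
  | 0, _ + 1, _, _ => rfl
  | j + 1, k + 1, h, g => by
      simp [piMap, piMap_gt s d hs hd j k (by omega) g,
        piMap_gt s d hs hd j (k + 1) (by omega) g, hs, hd]

lemma piMap_diag {A : Type*} [AddZeroClass A] (s d : A → A) (hs : s 0 = 0) (hd : d 0 = 0) :
    ∀ j g, piMap s d j j g = s^[j] g
  | 0, _ => rfl
  | j + 1, g => by
      rw [Function.iterate_succ_apply']
      simp [piMap, piMap_diag s d hs hd j g, piMap_gt s d hs hd j (j + 1) (by omega) g, hd]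

lemma iter_single {J : Type*} (σ : J ≃ J) (x : J) :
    ∀ m : ℕ, (Finsupp.equivMapDomain σ)^[m] (Finsupp.single x (1 : ℝ))
      = Finsupp.single ((σ ^ m) x) 1
  | 0 => by simp
  | m + 1 => by
      rw [Function.iterate_succ_apply', iter_single σ x m, Finsupp.equivMapDomain_single,
        pow_succ']
      rfl

theorem stmt12 (J : Type*) [Countable J] (σ : J ≃ J)
    (Δ : (J →₀ ℝ) →ₗ[ℝ] (J →₀ ℝ))
    (hΔ : ∀ f g : J →₀ ℝ, Δ (f * g) = Finsupp.equivMapDomain σ f * Δ g + Δ f * g)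
    (m : ℕ) (f : ℕ → J →₀ ℝ)
    (hc : ∀ g : J →₀ ℝ, ∀ k ≤ m,
      g * f k = ∑ j ∈ Finset.Icc k m, f j * piMap (Finsupp.equivMapDomain σ) (⇑Δ) j k g) :
    ∀ x : J, (σ ^ m) x ≠ x → f m x = 0 := by
  intro x hx
  have h := hc (Finsupp.single x 1) m le_rfl
  rw [Finset.Icc_self, Finset.sum_singleton,
    piMap_diag _ _ (by simp) (by simp), iter_single] at h
  have h2 := congrArg (fun p : J →₀ ℝ => p x) h
  simpa [Finsupp.mul_apply, Finsupp.single_apply, hx] using h2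
end

section
/- Let F : ℕ → A be finitely supported (F(k) = 0 for all but finitely many k), representing the element Σ_k F(k)·x^k of the non-unital skew polynomial ring A[x; σ̃, 0]. Then for every finitely supported G : ℕ → A and every m ∈ ℕ one has Σ_{k=0}^{m} F(k)·σ̃^k(G(m−k)) = Σ_{k=0}^{m} G(k)·σ̃^k(F(m−k)) (i.e. Σ_k F(k)·x^k lies in the center of A[x; σ̃, 0]) if and only if for every k ∈ ℕ, F(k) vanishes on Sep^k(J) and σ̃(F(k)) = F(k). -/
/-!
Write `σ̃ = equivMapDomain σ`. If every `F k` is `σ̃`-invariant, it is `σ̃ʲ`-invariant for all `j`,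
and if `F k` vanishes off the fixed points of `σᵏ`, then `F k * σ̃ᵏ g = F k * g`; after reversing
the order of summation the two products then agree term by term. Conversely, testing against the
monomials `δₓ · x⁰` in degree `k` and `δᵧ · x¹` in degree `k + 1` recovers both conditions.
-/

open Finset Finsupp

section SkewPolynomial

variable {α R : Type*}

theorem Finsupp.equivMapDomain_pow_eq_self {M : Type*} [Zero M] {e : Equiv.Perm α}
    {f : α →₀ M} (h : equivMapDomain e f = f) (n : ℕ) : equivMapDomain (e ^ n) f = f := by
  induction n with
  | zero => exact equivMapDomain_refl f
  | succ n ih => rw [pow_succ, Equiv.Perm.mul_def, equivMapDomain_trans, h, ih]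

theorem Finsupp.mul_equivMapDomain_of_eq_zero_of_ne [MulZeroClass R] {e : Equiv.Perm α}
    {f : α →₀ R} (hf : ∀ x, e x ≠ x → f x = 0) (g : α →₀ R) :
    f * equivMapDomain e g = f * g := by
  ext x
  rw [mul_apply, mul_apply, equivMapDomain_apply]
  by_cases hx : e x = x
  · rw [e.symm_apply_eq.2 hx.symm]
  · rw [hf x hx, zero_mul, zero_mul]

variable (σ : Equiv.Perm α)

/-- The `m`-th coefficient of `(∑ F k xᵏ) * (∑ G k xᵏ)` in `(α →₀ R)[x; σ̃, 0]`, where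
`σ̃ = equivMapDomain σ` sends `f` to `f ∘ σ⁻¹`. -/
noncomputable def skewMulCoeff [NonUnitalNonAssocSemiring R] (F G : ℕ → α →₀ R) (m : ℕ) :
    α →₀ R :=
  ∑ k ∈ range (m + 1), F k * equivMapDomain (σ ^ k) (G (m - k))

theorem skewMulCoeff_single_right [NonUnitalNonAssocSemiring R] (F : ℕ → α →₀ R) {n m : ℕ}
    (hnm : n ≤ m) (g : α →₀ R) :
    skewMulCoeff σ F (Pi.single n g) m = F (m - n) * equivMapDomain (σ ^ (m - n)) g := by
  rw [skewMulCoeff, sum_eq_single_of_mem (m - n) (mem_range.2 (by omega)),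
    Nat.sub_sub_self hnm, Pi.single_eq_same]
  intro k hk hkn
  rw [Pi.single_eq_of_ne (by grind), equivMapDomain_zero, mul_zero]

theorem skewMulCoeff_single_left [NonUnitalNonAssocSemiring R] (F : ℕ → α →₀ R) {n m : ℕ}
    (hnm : n ≤ m) (g : α →₀ R) :
    skewMulCoeff σ (Pi.single n g) F m = g * equivMapDomain (σ ^ n) (F (m - n)) := by
  rw [skewMulCoeff, sum_eq_single_of_mem n (mem_range.2 (by omega)), Pi.single_eq_same]
  intro k _ hkn
  rw [Pi.single_eq_of_ne hkn, zero_mul]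

theorem skewMulCoeff_comm [NonUnitalCommSemiring R] {F : ℕ → α →₀ R}
    (hsep : ∀ k x, (σ ^ k) x ≠ x → F k x = 0) (hinv : ∀ k, equivMapDomain σ (F k) = F k)
    (G : ℕ → α →₀ R) (m : ℕ) :
    skewMulCoeff σ F G m = skewMulCoeff σ G F m := by
  rw [skewMulCoeff, ← sum_range_reflect]
  refine sum_congr rfl fun j hj => ?_
  have hjm : j ≤ m := Nat.lt_succ_iff.1 (mem_range.1 hj)
  rw [Nat.add_sub_cancel, Nat.sub_sub_self hjm, mul_equivMapDomain_of_eq_zero_of_ne (hsep _),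
    equivMapDomain_pow_eq_self (hinv _), mul_comm]

end SkewPolynomial

theorem stmt13_general (J : Type*) (σ : J ≃ J)
    (F : ℕ → J →₀ ℝ) :
    (∀ G : ℕ → J →₀ ℝ, (Function.support G).Finite → ∀ m : ℕ,
        ∑ k ∈ Finset.range (m + 1), F k * Finsupp.equivMapDomain (σ ^ k) (G (m - k)) =
          ∑ k ∈ Finset.range (m + 1), G k * Finsupp.equivMapDomain (σ ^ k) (F (m - k))) ↔
      (∀ k : ℕ, (∀ x : J, (σ ^ k) x ≠ x → F k x = 0) ∧
        Finsupp.equivMapDomain σ (F k) = F k) := by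
  change (∀ G, _ → ∀ m, skewMulCoeff σ F G m = skewMulCoeff σ G F m) ↔ _
  have monomial_finite (n : ℕ) (g : J →₀ ℝ) : (Function.support (Pi.single n g)).Finite :=
    (Set.finite_singleton n).subset Pi.support_single_subset
  refine ⟨fun H k => ?_, fun h G _ => skewMulCoeff_comm σ (fun k => (h k).1) (fun k => (h k).2) G⟩
  have hsep : ∀ x, (σ ^ k) x ≠ x → F k x = 0 := by
    intro x hx
    have hx' := DFunLike.congr_fun (H _ (monomial_finite 0 (single x 1)) k) x
    rw [skewMulCoeff_single_right σ F k.zero_le, skewMulCoeff_single_left σ F k.zero_le,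
      pow_zero, Equiv.Perm.one_def, equivMapDomain_refl] at hx'
    simpa [single_apply, hx] using hx'.symm
  refine ⟨hsep, Finsupp.ext fun y => ?_⟩
  have hy := DFunLike.congr_fun (H _ (monomial_finite 1 (single y 1)) (k + 1)) y
  rw [skewMulCoeff_single_right σ F (by omega), skewMulCoeff_single_left σ F (by omega),
    Nat.add_sub_cancel, mul_equivMapDomain_of_eq_zero_of_ne hsep] at hy
  simpa using hy.symm

theorem stmt13 (J : Type*) [Countable J] (σ : J ≃ J)
    (F : ℕ → J →₀ ℝ) (hF : (Function.support F).Finite) :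
    (∀ G : ℕ → J →₀ ℝ, (Function.support G).Finite → ∀ m : ℕ,
        ∑ k ∈ Finset.range (m + 1), F k * Finsupp.equivMapDomain (σ ^ k) (G (m - k)) =
          ∑ k ∈ Finset.range (m + 1), G k * Finsupp.equivMapDomain (σ ^ k) (F (m - k))) ↔
      (∀ k : ℕ, (∀ x : J, (σ ^ k) x ≠ x → F k x = 0) ∧
        Finsupp.equivMapDomain σ (F k) = F k) :=
  stmt13_general J σ F
end

section
/- Let F : ℕ → A be an arbitrary sequence, representing the formal power series Σ_{n=0}^{∞} F(n)·x^n in the skew power series ring A[[x; σ̃]], in which x·g = σ̃(g)·x. Then F(n)·σ̃^n(g) = g·F(n) for all g ∈ A and all n ∈ ℕ (i.e. the power series commutes with every element of A) if and only if for every n ∈ ℕ, F(n) vanishes on Sep^n(X), i.e. F(n)(x) = 0 for every x ∈ X with σ^n(x) ≠ x. -/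
theorem stmt14 (n : ℕ) (hn : 1 ≤ n) (σ : Equiv.Perm (Fin n))
    (F : ℕ → Fin n → ℝ) :
    (∀ (g : Fin n → ℝ) (k : ℕ), F k * (g ∘ ⇑(σ ^ k).symm) = g * F k) ↔
      (∀ (k : ℕ) (x : Fin n), (σ ^ k) x ≠ x → F k x = 0) := by
  constructor
  · intro h k x hx
    have := congrFun (h (fun y => if y = x then (1:ℝ) else 0) k) x
    have hne : (σ ^ k).symm x ≠ x := by
      intro he
      apply hx
      conv_lhs => rw [← he]
      simp
    simp only [Pi.mul_apply, Function.comp_apply, if_neg hne, if_pos rfl] at this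
    simpa using this.symm
  · intro h g k
    funext x
    simp only [Pi.mul_apply, Function.comp_apply]
    by_cases hx : (σ ^ k) x = x
    · have : (σ ^ k).symm x = x := by
        conv_lhs => rw [← hx]
        simp
      rw [this, mul_comm]
    · rw [h k x hx, zero_mul, mul_zero]
end

section
/- Let F : ℕ → A be an arbitrary sequence, representing the formal power series Σ_{n=0}^{∞} F(n)·x^n in the skew power series ring A[[x; σ̃]]. Then for every sequence G : ℕ → A and every m ∈ ℕ one has Σ_{k=0}^{m} F(k)·σ̃^k(G(m−k)) = Σ_{k=0}^{m} G(k)·σ̃^k(F(m−k)) (i.e. the power series lies in the center of A[[x; σ̃]]) if and only if for every n ∈ ℕ, F(n) vanishes on Sep^n(X) and σ̃(F(n)) = F(n). -/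
/-!
If `F` is central, testing against the monomial `x` gives `σ̃ (F k) = F k`, and testing against
`δ_p` (the indicator of a point `p`) in degree `0` gives `F k p · δ_p (σ⁻ᵏ p) = F k p`, so `F k`
vanishes off the fixed points of `σᵏ`. Conversely, under these two conditions the `k`-th terms of
`F · G` and of `G · F` agree after reversing the order of summation: invariance removes the twist
on `F`, and the twist `σ⁻ᵏ` on `G` only acts where `F k` vanishes.
-/

open Finset

namespace SkewPowerSeries

variable {X : Type*}

theorem comp_pow_symm_eq {Y : Type*} {σ : Equiv.Perm X} {f : X → Y} (hf : f ∘ ⇑σ.symm = f)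
    (j : ℕ) : f ∘ ⇑(σ ^ j).symm = f := by
  induction j with
  | zero => rfl
  | succ j ih =>
    rw [pow_succ, Equiv.Perm.mul_def, Equiv.symm_trans, Equiv.coe_trans, ← Function.comp_assoc,
      hf, ih]

variable {R : Type*} [CommSemiring R] (σ : Equiv.Perm X)

/-- The `m`-th coefficient of the product `(∑ F k xᵏ) (∑ G k xᵏ)` in `(X → R)[[x; σ̃]]`,
where `σ̃ f = f ∘ σ⁻¹`. -/
def mulCoeff (F G : ℕ → X → R) (m : ℕ) : X → R :=
  ∑ k ∈ range (m + 1), F k * (G (m - k) ∘ ⇑(σ ^ k).symm)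

def IsCentral (F : ℕ → X → R) : Prop :=
  ∀ G m, mulCoeff σ F G m = mulCoeff σ G F m

variable {σ}

theorem mulCoeff_single_right (F : ℕ → X → R) (g : X → R) {j m : ℕ} (hj : j ≤ m) :
    mulCoeff σ F (Pi.single j g) m = F (m - j) * (g ∘ ⇑(σ ^ (m - j)).symm) := by
  rw [mulCoeff, sum_eq_single (m - j)]
  · rw [Nat.sub_sub_self hj, Pi.single_eq_same]
  · intro k hk hkj
    rw [mem_range] at hk
    rw [Pi.single_eq_of_ne (by omega), Pi.zero_comp, mul_zero]
  · intro hj'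
    exact absurd (mem_range.mpr (by omega)) hj'

theorem mulCoeff_single_left (F : ℕ → X → R) (g : X → R) {j m : ℕ} (hj : j ≤ m) :
    mulCoeff σ (Pi.single j g) F m = g * (F (m - j) ∘ ⇑(σ ^ j).symm) := by
  rw [mulCoeff, sum_eq_single j]
  · rw [Pi.single_eq_same]
  · intro k _ hkj
    rw [Pi.single_eq_of_ne hkj, zero_mul]
  · intro hj'
    exact absurd (mem_range.mpr (by omega)) hj'

theorem IsCentral.comp_symm_eq {F : ℕ → X → R} (h : IsCentral σ F) (k : ℕ) :
    F k ∘ ⇑σ.symm = F k := by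
  have h1 := h (Pi.single 1 1) (k + 1)
  rw [mulCoeff_single_right F 1 (by omega), mulCoeff_single_left F 1 (by omega)] at h1
  simpa using h1.symm

theorem IsCentral.eq_zero_of_apply_ne [DecidableEq X] {F : ℕ → X → R} (h : IsCentral σ F)
    (k : ℕ) {p : X} (hp : (σ ^ k) p ≠ p) : F k p = 0 := by
  have hp' : (σ ^ k).symm p ≠ p := fun hfix => hp ((Equiv.symm_apply_eq _).mp hfix).symm
  have h1 := congrFun (h (Pi.single 0 (Pi.single p 1)) k) p
  rw [mulCoeff_single_right F _ (Nat.zero_le k), mulCoeff_single_left F _ (Nat.zero_le k)] at h1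
  simpa [Pi.single_eq_of_ne hp', eq_comm, pull_end] using h1

theorem mul_comp_symm_eq_mul {f : X → R} {τ : Equiv.Perm X} (hf : ∀ p, τ p ≠ p → f p = 0)
    (g : X → R) : f * (g ∘ ⇑τ.symm) = f * g := by
  funext p
  by_cases hp : τ p = p
  · simp [(Equiv.symm_apply_eq τ).mpr hp.symm]
  · simp [hf p hp]

theorem isCentral_of_invariant {F : ℕ → X → R}
    (hfix : ∀ k p, (σ ^ k) p ≠ p → F k p = 0) (hinv : ∀ k, F k ∘ ⇑σ.symm = F k) :
    IsCentral σ F := by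
  intro G m
  rw [mulCoeff, mulCoeff]
  conv_rhs => rw [← sum_range_reflect]
  refine sum_congr rfl fun k hk => ?_
  have hkm : k ≤ m := Nat.lt_succ_iff.mp (mem_range.mp hk)
  rw [Nat.add_sub_cancel, Nat.sub_sub_self hkm, comp_pow_symm_eq (hinv k),
    mul_comp_symm_eq_mul (hfix k), mul_comm]

end SkewPowerSeries

open SkewPowerSeries in
theorem stmt15_general (n : ℕ) (σ : Equiv.Perm (Fin n))
    (F : ℕ → Fin n → ℝ) :
    (∀ (G : ℕ → Fin n → ℝ) (m : ℕ),
        ∑ k ∈ Finset.range (m + 1), F k * (G (m - k) ∘ ⇑(σ ^ k).symm) =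
          ∑ k ∈ Finset.range (m + 1), G k * (F (m - k) ∘ ⇑(σ ^ k).symm)) ↔
      (∀ k : ℕ, (∀ x : Fin n, (σ ^ k) x ≠ x → F k x = 0) ∧ F k ∘ ⇑σ.symm = F k) := by
  change IsCentral σ F ↔ _
  constructor
  · intro h k
    exact ⟨fun _ => h.eq_zero_of_apply_ne k, h.comp_symm_eq k⟩
  · intro h
    exact isCentral_of_invariant (fun k => (h k).1) (fun k => (h k).2)

theorem stmt15 (n : ℕ) (hn : 1 ≤ n) (σ : Equiv.Perm (Fin n))
    (F : ℕ → Fin n → ℝ) :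
    (∀ (G : ℕ → Fin n → ℝ) (m : ℕ),
        ∑ k ∈ Finset.range (m + 1), F k * (G (m - k) ∘ ⇑(σ ^ k).symm) =
          ∑ k ∈ Finset.range (m + 1), G k * (F (m - k) ∘ ⇑(σ ^ k).symm)) ↔
      (∀ k : ℕ, (∀ x : Fin n, (σ ^ k) x ≠ x → F k x = 0) ∧ F k ∘ ⇑σ.symm = F k) :=
  stmt15_general n σ F
end

section
/- Let F : ℤ → A be finitely supported (F(n) = 0 for all but finitely many n ∈ ℤ), representing the element Σ_{n∈ℤ} F(n)·x^n of the skew-Laurent ring A[x, x⁻¹; σ̃], in which x·g = σ̃(g)·x and x⁻¹·g = σ̃⁻¹(g)·x⁻¹. Then F(n)·σ̃^n(g) = g·F(n) for all g ∈ A and all n ∈ ℤ (i.e. Σ_n F(n)·x^n commutes with every element of A) if and only if for every n ∈ ℤ, F(n) vanishes on Sep^n(X), i.e. F(n)(x) = 0 for every x ∈ X with σ^n(x) ≠ x. -/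
theorem stmt16 (n : ℕ) (hn : 1 ≤ n) (σ : Equiv.Perm (Fin n))
    (F : ℤ → Fin n → ℝ) (hF : (Function.support F).Finite) :
    (∀ (g : Fin n → ℝ) (m : ℤ), F m * (g ∘ ⇑(σ ^ m).symm) = g * F m) ↔
      (∀ (m : ℤ) (x : Fin n), (σ ^ m) x ≠ x → F m x = 0) := by
  constructor
  · intro h m x hx
    have := congrFun (h (fun y => if y = x then 1 else 0) m) x
    simp only [Pi.mul_apply, Function.comp_apply] at this
    have hne : (σ ^ m).symm x ≠ x := fun he => hx (by
      conv_lhs => rw [← he]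
      simp)
    simp at this
    exact (this hne).symm
  · intro h g m
    funext x
    simp only [Pi.mul_apply, Function.comp_apply]
    by_cases hx : (σ ^ m) x = x
    · have hs : (σ ^ m).symm x = x := (Equiv.symm_apply_eq _).2 hx.symm
      rw [hs, mul_comm]
    · rw [h m x hx, zero_mul, mul_zero]
end
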